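/- The polynomials R_n(x) = Σ_{k=1}^{n-1} R(n,k) x^k satisfy the recurrence R_{n+2}(x) = x(nx+2) R_{n+1}(x) + x(1-x²) R_{n+1}'(x), with initial values R_1(x) = 1 and R_2(x) = 2x. -/

import Mathlib

open Polynomial Finset

/-- Derivative polynomials for tangent: `P 0 = X`, `P (n+1) = (1+X^2) * (P n)'`. -/
noncomputable def P : ℕ → Polynomial ℝ
  | 0 => Polynomial.X
  | n + 1 => (1 + Polynomial.X ^ 2) * (P n).derivative

/-- The values of a permutation of `Fin n`, as a function `ℕ → ℕ` (junk value `0` off-range). -/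
def permVal {n : ℕ} (π : Equiv.Perm (Fin n)) : ℕ → ℕ :=
  fun j => if h : j < n then (π ⟨j, h⟩ : ℕ) else 0

/-- The number of alternating runs of a permutation of `{1,…,n}` (0-indexed positions):
one more than the number of interior positions where the permutation changes direction.
By convention this is `0` when `n ≤ 1`. -/
def runs (n : ℕ) (π : Equiv.Perm (Fin n)) : ℕ :=
  if n ≤ 1 then 0 else
    1 + ((Finset.Ico 1 (n - 1)).filter (fun i =>
      (permVal π (i - 1) < permVal π i ∧ permVal π (i + 1) < permVal π i) ∨
      (permVal π i < permVal π (i - 1) ∧ permVal π i < permVal π (i + 1)))).card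

/-- `R n k`: the number of permutations of `{1,…,n}` with exactly `k` alternating runs. -/
def R (n k : ℕ) : ℕ :=
  (Finset.univ.filter (fun π : Equiv.Perm (Fin n) => runs n π = k)).card

/-- The generating polynomial `R_n(x) = ∑_k R(n,k) x^k`. -/
noncomputable def Rpoly (n : ℕ) : Polynomial ℝ :=
  ∑ k ∈ Finset.range n, Polynomial.C ((R n k : ℝ)) * Polynomial.X ^ k

/-- Stirling numbers of the second kind. -/
def stirling2 : ℕ → ℕ → ℕ
  | 0, 0 => 1
  | 0, _ + 1 => 0
  | _ + 1, 0 => 0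
  | n + 1, k + 1 => (k + 1) * stirling2 n (k + 1) + stirling2 n k

/-- The number of descents of a permutation of `Fin n`. -/
def des (n : ℕ) (π : Equiv.Perm (Fin n)) : ℕ :=
  ((Finset.range (n - 1)).filter (fun i => permVal π (i + 1) < permVal π i)).card


/-!
Every permutation of `{1, …, m + 1}` arises in exactly one way by inserting the largest value
into a permutation `σ` of `{1, …, m}` at one of the `m + 1` positions. In the up-down word of `σ`
(one letter per adjacent pair: up or down), inserting the maximum replaces one letter by
"up, down", or prepends "down", or appends "up", and the number of runs is one more than the
number of letter changes. A local check shows that if `σ` has `k` runs, then `k` positions keep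
the number of runs, two positions raise it by one and the remaining `m - 1 - k` raise it by two.
Hence `∑ₚ x ^ runs = x ^ k (k + 2x + (m - 1 - k) x²)`, and summing over `σ` gives
`x (n x + 2) R_{n+1} + x (1 - x²) R_{n+1}'` because `x (x ^ k)' = k x ^ k`.
-/

theorem Polynomial.X_mul_derivative_X_pow {R : Type*} [CommSemiring R] (k : ℕ) :
    X * derivative (X ^ k : R[X]) = C (k : R) * X ^ k := by
  cases k <;> simp [derivative_X_pow_succ]
  ring

namespace AlternatingRuns

def changes (w : ℕ → Bool) (a b : ℕ) : ℕ := #{i ∈ Ico a b | w i ≠ w (i + 1)}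

section Changes

variable (w : ℕ → Bool)

theorem changes_add {a b c : ℕ} (hab : a ≤ b) (hbc : b ≤ c) :
    changes w a b + changes w b c = changes w a c := by
  simp only [changes, card_filter]
  exact sum_Ico_consecutive _ hab hbc

theorem changes_succ (a : ℕ) : changes w a (a + 1) = if w a = w (a + 1) then 0 else 1 := by
  by_cases h : w a = w (a + 1) <;> simp [changes, filter_singleton, h]

variable {w}

theorem changes_congr {v : ℕ → Bool} {a b : ℕ} (h : ∀ i ∈ Icc a b, w i = v i) :
    changes w a b = changes v a b := by
  refine congrArg card (filter_congr fun i hi => ?_)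
  simp only [mem_Ico] at hi
  rw [h i (by simp; omega), h (i + 1) (by simp; omega)]

theorem changes_shift {v : ℕ → Bool} {a b : ℕ} (h : ∀ i ∈ Icc a b, v (i + 1) = w i) :
    changes v (a + 1) (b + 1) = changes w a b := by
  rw [changes, ← map_add_right_Ico, filter_map, card_map]
  refine congrArg card (filter_congr fun i hi => ?_)
  simp only [mem_Ico] at hi
  simp [h i (by simp; omega), h (i + 1) (by simp; omega)]

end Changes

/-- The up-down word (`true` = up) of a sequence after its maximum is inserted at position `p`:
the letter `w (p - 1)` becomes "up, down"; at the ends a "down" is prepended or an "up" appended. -/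
def insertPeak (w : ℕ → Bool) (p j : ℕ) : Bool :=
  if j + 1 < p then w j else if j + 1 = p then true else if j = p then false else w (j - 1)

section InsertPeak

variable {w : ℕ → Bool} {p j : ℕ}

theorem insertPeak_of_lt (h : j + 1 < p) : insertPeak w p j = w j := by
  simp [insertPeak, h]

@[simp]
theorem insertPeak_pred : insertPeak w (j + 1) j = true := by
  simp [insertPeak]

@[simp]
theorem insertPeak_self : insertPeak w p p = false := by
  simp [insertPeak]

theorem insertPeak_succ_of_le (h : p ≤ j) : insertPeak w p (j + 1) = w j := by
  unfold insertPeak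
  rw [if_neg (by omega), if_neg (by omega), if_neg (by omega), Nat.add_sub_cancel]

end InsertPeak

/-- The new letter of `insertPeak w p` either splits a block of equal letters (gain 2), joins the
neighbouring block (gain 0), or lies at an end of the word (gain 1). -/
def peakGain (w : ℕ → Bool) (L p : ℕ) : ℕ :=
  if p = 0 then (if w 0 then 1 else 0)
  else if L < p then (if w (L - 1) then 0 else 1)
  else if w (p - 1) then (if p = L then 1 else if w p then 2 else 0)
  else if p = 1 then 1 else if w (p - 2) then 0 else 2

-- Each side carries its own version of the affected change, so that no subtraction occurs.
theorem changes_insertPeak_left (w : ℕ → Bool) (q : ℕ) :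
    changes (insertPeak w (q + 1)) 0 q + (if q = 0 ∨ w (q - 1) = w q then 0 else 1) =
      changes w 0 q + (if q = 0 ∨ w (q - 1) then 0 else 1) := by
  rcases q with _ | r
  · simp [changes]
  simp only [Nat.add_sub_cancel, add_eq_zero, one_ne_zero, and_false, false_or]
  have hagree : changes (insertPeak w (r + 2)) 0 r = changes w 0 r :=
    changes_congr fun i hi => insertPeak_of_lt (by simp at hi; omega)
  rw [← changes_add _ (Nat.zero_le r) r.le_succ, ← changes_add _ (Nat.zero_le r) r.le_succ, hagree,
    changes_succ, changes_succ, insertPeak_of_lt (by omega), insertPeak_pred]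
  cases w r <;> cases w (r + 1) <;> simp

theorem changes_insertPeak_right (w : ℕ → Bool) {q k : ℕ} (hq : q ≤ k) :
    changes (insertPeak w (q + 1)) (q + 1) (k + 1) + (if q = k ∨ w q = w (q + 1) then 0 else 1) =
      changes w q k + (if q = k ∨ ¬ w (q + 1) then 0 else 1) := by
  rcases hq.eq_or_lt with rfl | hlt
  · simp [changes]
  have hshift : changes (insertPeak w (q + 1)) (q + 2) (k + 1) = changes w (q + 1) k :=
    changes_shift fun i hi => insertPeak_succ_of_le (by simp at hi; omega)
  rw [← changes_add _ (q + 1).le_succ (by omega : q + 2 ≤ k + 1), ← changes_add _ q.le_succ hlt,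
    hshift, changes_succ, changes_succ, insertPeak_succ_of_le le_rfl, insertPeak_self]
  cases w q <;> cases w (q + 1) <;> simp [hlt.ne, add_comm]

theorem changes_insertPeak (w : ℕ → Bool) {L p : ℕ} (hL : 1 ≤ L) (hp : p ≤ L + 1) :
    changes (insertPeak w p) 0 L = changes w 0 (L - 1) + peakGain w L p := by
  obtain ⟨k, rfl⟩ : ∃ k, L = k + 1 := ⟨L - 1, by omega⟩
  rw [Nat.add_sub_cancel]
  rcases p with _ | q
  · rw [← changes_add _ (Nat.zero_le 1) (by omega), changes_succ,
      changes_shift fun i _ => insertPeak_succ_of_le (Nat.zero_le i)]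
    cases h : w 0 <;> simp [peakGain, insertPeak, h, add_comm]
  rcases (Nat.le_of_lt_succ hp).eq_or_lt with rfl | hq
  · rw [← changes_add _ (Nat.zero_le k) k.le_succ, changes_succ,
      changes_congr fun i hi => insertPeak_of_lt (by simp at hi; omega),
      insertPeak_of_lt (by omega), insertPeak_pred]
    cases h : w k <;> simp [peakGain, h]
  have hq : q ≤ k := by omega
  have hleft := changes_insertPeak_left w q
  have hright := changes_insertPeak_right w hq
  rw [← changes_add _ (by omega : 0 ≤ q + 1) (by omega : q + 1 ≤ k + 1),
    ← changes_add _ (Nat.zero_le q) q.le_succ, ← changes_add _ (Nat.zero_le q) hq, changes_succ,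
    insertPeak_pred, insertPeak_self]
  simp only [peakGain, add_tsub_cancel_right, Nat.add_eq_zero_iff, one_ne_zero, and_false,
    if_false, show ¬ k + 1 < q + 1 by omega, Nat.add_right_cancel_iff,
    show q + 1 - 2 = q - 1 by omega, Nat.add_eq_right]
  generalize w (q - 1) = a at *
  generalize w q = b at *
  generalize w (q + 1) = c at *
  cases a <;> cases b <;> cases c <;> simp only [Bool.false_eq_true, if_true, if_false] at * <;>
    split_ifs at * <;> simp_all <;> omega

theorem peakGain_of_lt {w : ℕ → Bool} {L p : ℕ} (h : p < L) :
    peakGain w (L + 1) p = peakGain w L p := by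
  simp only [peakGain, show ¬ L + 1 < p by omega, show ¬ L < p by omega, show p ≠ L + 1 by omega,
    show p ≠ L by omega, if_false]

theorem sum_pow_peakGain {R : Type*} [CommRing R] (x : R) (w : ℕ → Bool) {L : ℕ} (hL : 1 ≤ L) :
    ∑ p ∈ range (L + 2), x ^ peakGain w L p =
      (changes w 0 (L - 1) + 1 : R) + 2 * x + ((L : R) - 1 - changes w 0 (L - 1)) * x ^ 2 := by
  obtain ⟨k, rfl⟩ : ∃ k, L = k + 1 := ⟨L - 1, by omega⟩
  simp only [Nat.add_sub_cancel, Nat.cast_add, Nat.cast_one, add_sub_cancel_right]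
  clear hL
  induction k with
  | zero =>
    cases h : w 0 <;> simp [sum_range_succ, peakGain, changes, h] <;> ring
  | succ k ih =>
    -- Appending a letter to the word adds a change (weight `1`) or not (weight `x ^ 2`).
    rw [sum_range_succ, sum_range_succ] at ih
    rw [sum_range_succ, sum_range_succ, sum_range_succ,
      sum_congr rfl fun p hp => by rw [peakGain_of_lt (mem_range.1 hp)],
      ← changes_add w (Nat.zero_le k) k.le_succ, changes_succ]
    have hend : ∀ L, peakGain w (L + 1) (L + 2) = if w L then 0 else 1 := fun L => by
      simp [peakGain]
    have hpeak : peakGain w (k + 2) (k + 1) =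
        if w k then (if w (k + 1) then 2 else 0) else peakGain w (k + 1) (k + 1) := by
      cases h : w k <;> simp [peakGain, h]
    have hinner : peakGain w (k + 2) (k + 2) = if w (k + 1) then 1 else if w k then 0 else 2 := by
      simp [peakGain]
    have hedge : w k → peakGain w (k + 1) (k + 1) = 1 := fun h => by simp [peakGain, h]
    rw [hend] at ih
    rw [hpeak, hinner, show k + 3 = k + 1 + 2 from rfl, hend]
    cases hk : w k
    · cases w (k + 1) <;> simp [hk] at ih ⊢ <;> linear_combination ih
    · rw [hedge hk] at ih
      cases w (k + 1) <;> simp [hk] at ih ⊢ <;> linear_combination ih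

def ascents {α : Type*} [LinearOrder α] (f : ℕ → α) (i : ℕ) : Bool := decide (f i < f (i + 1))

theorem peak_or_valley_iff {α : Type*} [LinearOrder α] {a b c : α} (hab : a ≠ b) (hbc : b ≠ c) :
    (a < b ∧ c < b ∨ b < a ∧ b < c) ↔ decide (a < b) ≠ decide (b < c) := by
  rcases hab.lt_or_gt with h | h <;> rcases hbc.lt_or_gt with h' | h' <;>
    simp [h, h', h.not_gt, h'.not_gt]

theorem ascents_eq_insertPeak {α : Type*} [LinearOrder α] {f g : ℕ → α} {M : α} {m p : ℕ}
    (hfM : ∀ j < m, f j < M) (hlt : ∀ j < p, g j = f j) (hp : g p = M)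
    (hgt : ∀ j, p ≤ j → j < m → g (j + 1) = f j) {j : ℕ} (hj : j < m) :
    ascents g j = insertPeak (ascents f) p j := by
  unfold ascents insertPeak
  split_ifs with h₁ h₂ h₃
  · rw [hlt j (by omega), hlt (j + 1) h₁]
  · rw [hlt j (by omega), h₂, hp, decide_eq_true (hfM j hj)]
  · rw [h₃, hp, hgt p le_rfl (h₃ ▸ hj), decide_eq_false (hfM p (h₃ ▸ hj)).not_gt]
  · obtain ⟨i, rfl⟩ : ∃ i, j = i + 1 := ⟨j - 1, by omega⟩
    rw [hgt i (by omega) (by omega), hgt (i + 1) (by omega) hj, Nat.add_sub_cancel]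

section Perm

variable {n : ℕ} (π : Equiv.Perm (Fin n))

theorem permVal_lt {j : ℕ} (hj : j < n) : permVal π j < n := by
  simp [permVal, hj]

theorem permVal_ne {i j : ℕ} (hi : i < n) (hj : j < n) (hij : i ≠ j) :
    permVal π i ≠ permVal π j := by
  simpa [permVal, hi, hj, Fin.val_eq_val, Fin.ext_iff] using hij

theorem runs_lt (hn : 1 ≤ n) : runs n π < n := by
  unfold runs
  split_ifs
  · omega
  · refine (Nat.add_le_add_left (card_filter_le _ _) 1).trans_lt ?_
    simp only [Nat.card_Ico]
    omega

theorem runs_eq_changes (hn : 2 ≤ n) : runs n π = 1 + changes (ascents (permVal π)) 0 (n - 2) := by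
  rw [runs, if_neg (by omega), changes,
    show Ico 1 (n - 1) = (Ico 0 (n - 2)).map (addRightEmbedding 1) by
      rw [map_add_right_Ico, show n - 2 + 1 = n - 1 by omega],
    filter_map, card_map]
  refine congrArg _ (congrArg card (filter_congr fun i hi => ?_))
  simp only [mem_Ico] at hi
  simp only [Function.comp_apply, addRightEmbedding_apply, Nat.add_sub_cancel, ascents]
  exact peak_or_valley_iff (permVal_ne π (by omega) (by omega) (by omega))
    (permVal_ne π (by omega) (by omega) (by omega))

end Perm

def insertMax {m : ℕ} (σ : Equiv.Perm (Fin m)) (p : Fin (m + 1)) : Equiv.Perm (Fin (m + 1)) :=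
  (finSuccEquiv' p).trans ((Equiv.optionCongr σ).trans finSuccEquivLast.symm)

section InsertMax

variable {m : ℕ} (σ : Equiv.Perm (Fin m)) (p : Fin (m + 1))

@[simp]
theorem insertMax_apply_self : insertMax σ p p = Fin.last m := by
  simp [insertMax]

@[simp]
theorem insertMax_apply_succAbove (i : Fin m) : insertMax σ p (p.succAbove i) = (σ i).castSucc := by
  simp [insertMax, finSuccEquivLast_symm_some]

theorem insertMax_bijective :
    Function.Bijective fun q : Equiv.Perm (Fin m) × Fin (m + 1) => insertMax q.1 q.2 := by
  refine (Fintype.bijective_iff_injective_and_card _).2 ⟨?_, ?_⟩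
  · rintro ⟨σ, p⟩ ⟨τ, q⟩ h
    simp only at h
    obtain rfl : p = q :=
      (insertMax σ p).injective (by rw [insertMax_apply_self, h, insertMax_apply_self])
    refine Prod.ext (Equiv.ext fun i => ?_) rfl
    simpa using congrArg (· (p.succAbove i)) h
  · simp [Fintype.card_perm, Nat.factorial_succ, mul_comm]

theorem permVal_insertMax_of_lt {j : ℕ} (hj : j < p) : permVal (insertMax σ p) j = permVal σ j := by
  have hjm : j < m := by omega
  have : (⟨j, by omega⟩ : Fin (m + 1)) = p.succAbove ⟨j, hjm⟩ := by
    rw [Fin.succAbove_of_castSucc_lt _ _ (by simpa [Fin.lt_def] using hj)]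
    rfl
  simp [permVal, hjm, show j < m + 1 by omega, this]

theorem permVal_insertMax_self : permVal (insertMax σ p) p = m := by
  simp [permVal, p.is_lt]

theorem permVal_insertMax_succ {j : ℕ} (hpj : p ≤ j) (hj : j < m) :
    permVal (insertMax σ p) (j + 1) = permVal σ j := by
  have : (⟨j + 1, by omega⟩ : Fin (m + 1)) = p.succAbove ⟨j, hj⟩ := by
    rw [Fin.succAbove_of_le_castSucc _ _ (by simpa [Fin.le_def] using hpj)]
    rfl
  simp [permVal, hj, this]

theorem runs_insertMax (hm : 2 ≤ m) :
    runs (m + 1) (insertMax σ p) = runs m σ + peakGain (ascents (permVal σ)) (m - 1) p := by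
  have hasc : ∀ j ∈ Icc 0 (m - 1),
      ascents (permVal (insertMax σ p)) j = insertPeak (ascents (permVal σ)) p j := fun j hj =>
    ascents_eq_insertPeak (fun j hj => permVal_lt σ hj) (fun j hj => permVal_insertMax_of_lt σ p hj)
      (permVal_insertMax_self σ p) (fun j hpj hj => permVal_insertMax_succ σ p hpj hj)
      (by simp at hj; omega)
  rw [runs_eq_changes _ (by omega), runs_eq_changes _ hm, show m + 1 - 2 = m - 1 by omega,
    changes_congr hasc, changes_insertPeak _ (by omega) (by omega), show m - 1 - 1 = m - 2 by omega]
  ring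

end InsertMax

theorem sum_pow_runs_insertMax {R : Type*} [CommRing R] (x : R) {m : ℕ} (hm : 2 ≤ m)
    (σ : Equiv.Perm (Fin m)) :
    ∑ p : Fin (m + 1), x ^ runs (m + 1) (insertMax σ p) =
      x ^ runs m σ * (runs m σ + 2 * x + ((m : R) - 1 - runs m σ) * x ^ 2) := by
  simp_rw [runs_insertMax σ _ hm, pow_add, ← mul_sum]
  rw [Fin.sum_univ_eq_sum_range (fun p => x ^ peakGain _ (m - 1) p),
    show m + 1 = m - 1 + 2 by omega, sum_pow_peakGain x _ (by omega), runs_eq_changes σ hm,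
    Nat.cast_sub (by omega : 1 ≤ m), show m - 1 - 1 = m - 2 by omega]
  push_cast
  ring

theorem Rpoly_eq_sum_pow_runs {n : ℕ} (hn : 1 ≤ n) :
    Rpoly n = ∑ π : Equiv.Perm (Fin n), X ^ runs n π := by
  rw [Rpoly, ← sum_fiberwise_of_maps_to (g := runs n) (t := range n)
    fun π _ => mem_range.2 (runs_lt π hn)]
  refine sum_congr rfl fun k _ => ?_
  rw [sum_congr rfl fun π hπ => by rw [(mem_filter.1 hπ).2], sum_const, R, nsmul_eq_mul,
    map_natCast]

theorem Rpoly_one : Rpoly 1 = 1 := by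
  simp [Rpoly_eq_sum_pow_runs le_rfl, runs]

theorem Rpoly_two : Rpoly 2 = 2 * X := by
  simp [Rpoly_eq_sum_pow_runs one_le_two, runs, Fintype.card_perm]

end AlternatingRuns

open AlternatingRuns

/-- The recurrence `R_{n+2}(x) = x(nx+2)R_{n+1}(x) + x(1-x²)R_{n+1}'(x)`,
with `R_1(x) = 1` and `R_2(x) = 2x`. -/
theorem Rpoly_recurrence :
    (∀ n : ℕ,
      Rpoly (n + 2) =
        Polynomial.X * (Polynomial.C (n : ℝ) * Polynomial.X + 2) * Rpoly (n + 1) +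
          Polynomial.X * (1 - Polynomial.X ^ 2) * (Rpoly (n + 1)).derivative)
    ∧ Rpoly 1 = 1 ∧ Rpoly 2 = 2 * Polynomial.X := by
  refine ⟨fun n => ?_, Rpoly_one, Rpoly_two⟩
  rcases n with _ | n
  · simp [Rpoly_one, Rpoly_two]
    ring
  rw [Rpoly_eq_sum_pow_runs (by omega), Rpoly_eq_sum_pow_runs (by omega),
    ← insertMax_bijective.sum_comp fun π : Equiv.Perm (Fin (n + 2 + 1)) => (X : ℝ[X]) ^ runs _ π,
    Fintype.sum_prod_type, derivative_sum, mul_sum, mul_sum, ← sum_add_distrib]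
  refine Finset.sum_congr rfl fun σ _ => ?_
  rw [sum_pow_runs_insertMax X (by omega) σ, mul_assoc X (1 - X ^ 2), mul_left_comm,
    X_mul_derivative_X_pow]
  push_cast
  simp only [← C_eq_natCast, map_add, map_one]
  ring
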